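/- Let T > 0, κ ∈ (0,1), let S : [0,T] → (0,∞) be continuous, and let γ : [0,T] → ℝ be right-continuous of bounded variation with γ_{0−} = 0 and γ_T = 0. For n ∈ ℕ define γ̄^n_t := Σ_{i=1}^{n−1} γ_{(i−1)T/n} · 1_{[iT/n, (i+1)T/n)}(t) for t ∈ [0,T) and γ̄^n_T := 0. Then liminf_{n→∞} inf_{0≤t≤T} V^{γ̄^n}_t ≥ inf_{0≤t≤T} V^γ_t. -/

import Mathlib

open MeasureTheory Set

/-- The (signed) Lebesgue–Stieltjes integral `∫_{[0,t]} S dγ`, where the strategy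
`γ_u = μ([0,u])` is encoded by its signed Lebesgue–Stieltjes measure `μ` (the convention
`γ_{0−} = 0` means the jump at time `0` is included). -/
noncomputable def stieltjesIntegral (S : ℝ → ℝ) (μ : SignedMeasure ℝ) (t : ℝ) : ℝ :=
  (∫ u in Icc 0 t, S u ∂μ.toJordanDecomposition.posPart) -
    (∫ u in Icc 0 t, S u ∂μ.toJordanDecomposition.negPart)

/-- The integral `∫_{[0,t]} S |dγ|` against the total variation measure of `γ`. -/
noncomputable def totalVarIntegral (S : ℝ → ℝ) (μ : SignedMeasure ℝ) (t : ℝ) : ℝ :=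
  ∫ u in Icc 0 t, S u ∂μ.totalVariation

/-- The portfolio value `V^γ_t = γ_t S_t − ∫_{[0,t]} S dγ − κ|γ_t| S_t − κ ∫_{[0,t]} S |dγ|`
under proportional transaction costs of rate `κ`, with `γ_u = μ([0,u])`. -/
noncomputable def portfolioValue (κ : ℝ) (S : ℝ → ℝ) (μ : SignedMeasure ℝ) (t : ℝ) : ℝ :=
  μ (Icc 0 t) * S t - stieltjesIntegral S μ t - κ * |μ (Icc 0 t)| * S t -
    κ * totalVarIntegral S μ t

/-- The discretized strategy `γ̄^n_t = Σ_{i=1}^{n−1} γ_{(i−1)T/n} 1_{[iT/n,(i+1)T/n)}(t)`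
(so in particular `γ̄^n_T = 0`). -/
noncomputable def gbar (T : ℝ) (γ : ℝ → ℝ) (n : ℕ) (t : ℝ) : ℝ :=
  ∑ i ∈ Finset.Ico 1 n,
    γ (((i : ℝ) - 1) * T / n) *
      Set.indicator (Set.Ico ((i : ℝ) * T / n) (((i : ℝ) + 1) * T / n)) (fun _ => 1) t

/-- The value of `γ̄^n` on the grid cell `[iT/n, (i+1)T/n)` (with `bval n = 0`, the
liquidation value at `T`). -/
noncomputable def bval (T : ℝ) (γ : ℝ → ℝ) (n i : ℕ) : ℝ :=
  if i = 0 ∨ n ≤ i then 0 else γ (((i : ℝ) - 1) * T / n)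

/-- The portfolio value `V^{γ̄^n}_t` of the piecewise-constant strategy `γ̄^n`, whose
Lebesgue–Stieltjes measure is the sum of the point masses
`(bval(i+1) − bval(i)) δ_{(i+1)T/n}`, `i = 0, …, n−1`. -/
noncomputable def stepPortfolioValue (T κ : ℝ) (S γ : ℝ → ℝ) (n : ℕ) (t : ℝ) : ℝ :=
  gbar T γ n t * S t
    - ∑ i ∈ Finset.range n,
        Set.indicator (Set.Iic t) (fun _ => 1) (((i : ℝ) + 1) * T / n) *
          S (((i : ℝ) + 1) * T / n) * (bval T γ n (i + 1) - bval T γ n i)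
    - κ * |gbar T γ n t| * S t
    - κ * ∑ i ∈ Finset.range n,
        Set.indicator (Set.Iic t) (fun _ => 1) (((i : ℝ) + 1) * T / n) *
          S (((i : ℝ) + 1) * T / n) * |bval T γ n (i + 1) - bval T γ n i|

/-!
On the cell `[iT/n, (i+1)T/n)` the discretized strategy holds `γ_τ`, `τ = (i-1)T/n`, and has
traded only at the grid points before it, the trade at `(j+1)T/n` being
`γ_{jT/n} - γ_{(j-1)T/n} = μ((j-1)T/n, jT/n]`. Its wealth is therefore a Riemann–Stieltjes
sum for `V^γ_τ` whose tags lie within `2T/n` of their cells, so once `S` oscillates by at most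
`ε` over distances `2T/n`, it is at least `V^γ_τ - 2(1 + κ) |μ|([0,T]) ε`. The liquidation at
`T` is priced at `S_T`, again within `2T/n` of `τ = (n-2)T/n`. On the first cell nothing is
held and the wealth is `0 ≥ V^γ_0`.
-/

open Filter

section RiemannSum

variable {α : Type*} [MeasurableSpace α] {f : α → ℝ} {c : ℕ → ℝ} {ε : ℝ}

lemma abs_mul_measureReal_sub_setIntegral_le (m : Measure α) [IsFiniteMeasure m] {s : Set α}
    {a : ℝ} (hf : IntegrableOn f s m) (ha : ∀ x ∈ s, |f x - a| ≤ ε) :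
    |a * m.real s - ∫ x in s, f x ∂m| ≤ ε * m.real s := by
  rw [mul_comm, ← smul_eq_mul, ← setIntegral_const, ← integral_sub (integrable_const a) hf]
  refine norm_setIntegral_le_of_norm_le_const (f := fun x => a - f x) (measure_lt_top m s)
    fun x hx => ?_
  rw [Real.norm_eq_abs, abs_sub_comm]
  exact ha x hx

lemma abs_sum_mul_measureReal_sub_setIntegral_le (m : Measure α) [IsFiniteMeasure m]
    {A : ℕ → Set α} (hA : Monotone A) (hAm : ∀ j, MeasurableSet (A j)) {k : ℕ}
    (hf : IntegrableOn f (A k) m) (hc : ∀ j < k, ∀ x ∈ A (j + 1) \ A j, |f x - c j| ≤ ε) :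
    |∑ j ∈ Finset.range k, c j * (m.real (A (j + 1)) - m.real (A j)) -
        ((∫ x in A k, f x ∂m) - ∫ x in A 0, f x ∂m)| ≤
      ε * (m.real (A k) - m.real (A 0)) := by
  rw [← Finset.sum_range_sub (fun j => ∫ x in A j, f x ∂m),
    ← Finset.sum_range_sub (fun j => m.real (A j)), Finset.mul_sum, ← Finset.sum_sub_distrib]
  refine (Finset.abs_sum_le_sum_abs _ _).trans (Finset.sum_le_sum fun j hj => ?_)
  have hjk : j + 1 ≤ k := Finset.mem_range.1 hj
  have hf' : IntegrableOn f (A (j + 1)) m := hf.mono_set (hA hjk)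
  rw [← measureReal_sdiff (hA j.le_succ) (hAm j),
    ← setIntegral_sdiff (hAm j) hf' (hA j.le_succ)]
  exact abs_mul_measureReal_sub_setIntegral_le m (hf'.mono_set sdiff_subset) (hc j hjk)

end RiemannSum

namespace MeasureTheory.SignedMeasure

variable {α : Type*} [MeasurableSpace α]

lemma totalVariation_real_apply (μ : SignedMeasure α) (s : Set α) :
    μ.totalVariation.real s =
      μ.toJordanDecomposition.posPart.real s + μ.toJordanDecomposition.negPart.real s :=
  measureReal_add_apply

lemma abs_apply_sub_apply_le (μ : SignedMeasure α) {s t : Set α}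
    (hs : MeasurableSet s) (ht : MeasurableSet t) (hst : s ⊆ t) :
    |μ t - μ s| ≤ μ.totalVariation.real t - μ.totalVariation.real s := by
  rw [μ.apply_eq_posPart_real_sub_negPart_real hs, μ.apply_eq_posPart_real_sub_negPart_real ht,
    μ.totalVariation_real_apply, μ.totalVariation_real_apply]
  have hP := measureReal_mono (μ := μ.toJordanDecomposition.posPart) hst
  have hN := measureReal_mono (μ := μ.toJordanDecomposition.negPart) hst
  rw [abs_le]
  constructor <;> linarith

lemma abs_apply_le_totalVariation_real (μ : SignedMeasure α) {s : Set α}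
    (hs : MeasurableSet s) : |μ s| ≤ μ.totalVariation.real univ := by
  simpa using (μ.abs_apply_sub_apply_le MeasurableSet.empty hs (empty_subset s)).trans
    (sub_le_self _ measureReal_nonneg) |>.trans (measureReal_mono (subset_univ s))

end MeasureTheory.SignedMeasure

section StieltjesSum

variable (μ : SignedMeasure ℝ) {S : ℝ → ℝ} {q c : ℕ → ℝ} {ε : ℝ} {k : ℕ}

lemma abs_sum_mul_sub_stieltjesIntegral_le (hq : Monotone q) (hq0 : q 0 < 0)
    (hS : IntegrableOn S (Icc 0 (q k)) μ.totalVariation)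
    (hc : ∀ j < k, ∀ u ∈ Icc 0 (q (j + 1)) \ Icc 0 (q j), |S u - c j| ≤ ε) :
    |∑ j ∈ Finset.range k, c j * (μ (Icc 0 (q (j + 1))) - μ (Icc 0 (q j))) -
        stieltjesIntegral S μ (q k)| ≤ ε * μ.totalVariation.real (Icc 0 (q k)) := by
  set P := μ.toJordanDecomposition.posPart
  set N := μ.toJordanDecomposition.negPart
  have hA : Monotone fun j => Icc (0 : ℝ) (q j) := fun i j h => Icc_subset_Icc_right (hq h)
  have h0 : Icc (0 : ℝ) (q 0) = ∅ := Icc_eq_empty hq0.not_ge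
  have hP := abs_sum_mul_measureReal_sub_setIntegral_le P hA (fun _ => measurableSet_Icc)
    (hS.mono_measure (Measure.le_add_right le_rfl)) hc
  have hN := abs_sum_mul_measureReal_sub_setIntegral_le N hA (fun _ => measurableSet_Icc)
    (hS.mono_measure (Measure.le_add_left le_rfl)) hc
  simp only [h0, setIntegral_empty, measureReal_empty, sub_zero] at hP hN
  have hsplit : ∑ j ∈ Finset.range k, c j * (μ (Icc 0 (q (j + 1))) - μ (Icc 0 (q j))) -
      stieltjesIntegral S μ (q k) =
      (∑ j ∈ Finset.range k, c j * (P.real (Icc 0 (q (j + 1))) - P.real (Icc 0 (q j))) -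
        ∫ u in Icc 0 (q k), S u ∂P) -
      (∑ j ∈ Finset.range k, c j * (N.real (Icc 0 (q (j + 1))) - N.real (Icc 0 (q j))) -
        ∫ u in Icc 0 (q k), S u ∂N) := by
    simp only [μ.apply_eq_posPart_real_sub_negPart_real measurableSet_Icc, stieltjesIntegral,
      mul_sub, Finset.sum_sub_distrib, P, N]
    ring
  rw [hsplit, μ.totalVariation_real_apply, mul_add]
  exact (abs_sub _ _).trans (add_le_add hP hN)

lemma sum_mul_abs_sub_le_totalVarIntegral_add (hq : Monotone q) (hq0 : q 0 < 0)
    (hS : IntegrableOn S (Icc 0 (q k)) μ.totalVariation)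
    (hc : ∀ j < k, ∀ u ∈ Icc 0 (q (j + 1)) \ Icc 0 (q j), |S u - c j| ≤ ε)
    (hc0 : ∀ j < k, 0 ≤ c j) :
    ∑ j ∈ Finset.range k, c j * |μ (Icc 0 (q (j + 1))) - μ (Icc 0 (q j))| ≤
      totalVarIntegral S μ (q k) + ε * μ.totalVariation.real (Icc 0 (q k)) := by
  have hA : Monotone fun j => Icc (0 : ℝ) (q j) := fun i j h => Icc_subset_Icc_right (hq h)
  have hV := abs_sum_mul_measureReal_sub_setIntegral_le μ.totalVariation hA
    (fun _ => measurableSet_Icc) hS hc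
  simp only [Icc_eq_empty hq0.not_ge, setIntegral_empty, measureReal_empty, sub_zero] at hV
  calc ∑ j ∈ Finset.range k, c j * |μ (Icc 0 (q (j + 1))) - μ (Icc 0 (q j))|
      ≤ ∑ j ∈ Finset.range k, c j *
          (μ.totalVariation.real (Icc 0 (q (j + 1))) - μ.totalVariation.real (Icc 0 (q j))) :=
        Finset.sum_le_sum fun j hj => mul_le_mul_of_nonneg_left
          (μ.abs_apply_sub_apply_le measurableSet_Icc measurableSet_Icc (hA j.le_succ))
          (hc0 j (Finset.mem_range.1 hj))
    _ ≤ totalVarIntegral S μ (q k) + ε * μ.totalVariation.real (Icc 0 (q k)) := by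
        rw [totalVarIntegral]
        linarith [(abs_sub_le_iff.1 hV).1]

end StieltjesSum

section Grid

variable {T : ℝ} {n : ℕ}

/-- The time `(j - 1) T / n` at which `γ` is sampled for the `j`-th grid cell; `gridPoint T n 0`
is negative, where `γ_u = μ([0, u])` vanishes. -/
noncomputable def gridPoint (T : ℝ) (n j : ℕ) : ℝ := ((j : ℝ) - 1) * T / n

lemma gridPoint_mono (hT : 0 ≤ T) : Monotone (gridPoint T n) := fun i j hij => by
  unfold gridPoint
  gcongr

lemma gridPoint_zero_neg (hT : 0 < T) (hn : 0 < n) : gridPoint T n 0 < 0 := by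
  simp only [gridPoint, CharP.cast_eq_zero, zero_sub, neg_one_mul, neg_div, neg_lt_zero]
  positivity

lemma gridPoint_le (hT : 0 ≤ T) (hn : 0 < n) {j : ℕ} (hj : j ≤ n + 1) :
    gridPoint T n j ≤ T := by
  have hj' : (j : ℝ) - 1 ≤ n := by
    have : (j : ℝ) ≤ n + 1 := by exact_mod_cast hj
    linarith
  rw [gridPoint, div_le_iff₀ (by positivity)]
  nlinarith

lemma gridPoint_add_two (j : ℕ) : gridPoint T n (j + 2) = ((j : ℝ) + 1) * T / n := by
  simp only [gridPoint]; push_cast; ring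

lemma abs_sub_gridPoint_add_two_le (hT : 0 ≤ T) {j : ℕ} {u : ℝ}
    (hu : u ∈ Icc 0 (gridPoint T n (j + 1)) \ Icc 0 (gridPoint T n j)) :
    |u - gridPoint T n (j + 2)| ≤ 2 * T / n := by
  obtain ⟨⟨hu0, hu⟩, hu'⟩ := hu
  have hju : gridPoint T n j < u := lt_of_not_ge fun h => hu' ⟨hu0, h⟩
  have hux : u ≤ gridPoint T n (j + 2) := hu.trans (gridPoint_mono hT (by omega))
  have hlen : gridPoint T n (j + 2) - gridPoint T n j = 2 * T / n := by
    simp only [gridPoint]; push_cast; ring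
  rw [abs_sub_comm, abs_of_nonneg (by linarith)]
  linarith

lemma mem_Ico_grid_iff (hT : 0 < T) (hn : 0 < n) {t : ℝ} (ht : 0 ≤ t) (k : ℕ) :
    t ∈ Ico ((k : ℝ) * T / n) (((k : ℝ) + 1) * T / n) ↔ ⌊t * n / T⌋₊ = k := by
  have hn' : (0 : ℝ) < n := by exact_mod_cast hn
  rw [Nat.floor_eq_iff (by positivity), mem_Ico, div_le_iff₀ hn', lt_div_iff₀ hn',
    le_div_iff₀ hT, div_lt_iff₀ hT]

lemma sum_indicator_Iic_grid (hT : 0 < T) (hn : 0 < n) {t : ℝ} (ht : t ∈ Icc 0 T)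
    (X : ℕ → ℝ) :
    ∑ j ∈ Finset.range n, (Iic t).indicator (fun _ => 1) (((j : ℝ) + 1) * T / n) * X j =
      ∑ j ∈ Finset.range ⌊t * n / T⌋₊, X j := by
  have hn' : (0 : ℝ) < n := by exact_mod_cast hn
  have hfloor : ⌊t * n / T⌋₊ ≤ n :=
    Nat.floor_le_of_le ((div_le_iff₀ hT).2 (by nlinarith [ht.1, ht.2]))
  have hmem : ∀ j : ℕ, ((j : ℝ) + 1) * T / n ∈ Iic t ↔ j < ⌊t * n / T⌋₊ := fun j => by
    rw [mem_Iic, Nat.lt_iff_add_one_le, Nat.le_floor_iff (by have := ht.1; positivity),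
      div_le_iff₀ hn', le_div_iff₀ hT]
    push_cast
    constructor <;> intro h <;> linarith
  simp only [indicator_apply, hmem, ite_mul, one_mul, zero_mul]
  rw [← Finset.sum_filter]
  congr 1
  ext j
  simp only [Finset.mem_filter, Finset.mem_range]
  omega

lemma bval_self (γ : ℝ → ℝ) : bval T γ n n = 0 := by simp [bval]

variable {γ : ℝ → ℝ}

lemma bval_eq_gridPoint (hT : 0 < T) (hγ : ∀ u < 0, γ u = 0) {j : ℕ} (hj : j < n) :
    bval T γ n j = γ (gridPoint T n j) := by
  rcases Nat.eq_zero_or_pos j with rfl | hj0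
  · simp [bval, hγ _ (gridPoint_zero_neg hT hj)]
  · rw [bval, if_neg (by omega), gridPoint]

lemma gbar_eq_bval_floor (hT : 0 < T) (hn : 0 < n) {t : ℝ} (ht : 0 ≤ t) :
    gbar T γ n t = bval T γ n ⌊t * n / T⌋₊ := by
  simp only [gbar, indicator_apply, mem_Ico_grid_iff hT hn ht, mul_ite, mul_one, mul_zero,
    Finset.sum_ite_eq, Finset.mem_Ico, bval]
  split_ifs <;> first | rfl | omega

end Grid

/-- `V^{γ̄^n}` at a time of the `i`-th grid cell `[iT/n, (i+1)T/n)` where the price is `s`. -/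
noncomputable def stepValue (T κ : ℝ) (S γ : ℝ → ℝ) (n i : ℕ) (s : ℝ) : ℝ :=
  bval T γ n i * s
    - ∑ j ∈ Finset.range i, S (((j : ℝ) + 1) * T / n) * (bval T γ n (j + 1) - bval T γ n j)
    - κ * |bval T γ n i| * s
    - κ * ∑ j ∈ Finset.range i, S (((j : ℝ) + 1) * T / n) * |bval T γ n (j + 1) - bval T γ n j|

section StepValue

variable {T κ : ℝ} {S γ : ℝ → ℝ} {n : ℕ}

lemma stepPortfolioValue_eq_stepValue (hT : 0 < T) (hn : 0 < n) {t : ℝ} (ht : t ∈ Icc 0 T) :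
    stepPortfolioValue T κ S γ n t = stepValue T κ S γ n ⌊t * n / T⌋₊ (S t) := by
  rw [stepPortfolioValue, stepValue, gbar_eq_bval_floor hT hn ht.1]
  simp only [mul_assoc]
  rw [sum_indicator_Iic_grid hT hn ht, sum_indicator_Iic_grid hT hn ht]

lemma stepValue_self (hn : 0 < n) (s : ℝ) :
    stepValue T κ S γ n n s = stepValue T κ S γ n (n - 1) (S T) := by
  obtain ⟨m, rfl⟩ : ∃ m, n = m + 1 := ⟨n - 1, by omega⟩
  have hT : ((m : ℝ) + 1) * T / ((m + 1 : ℕ) : ℝ) = T := by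
    push_cast
    field_simp
  simp only [stepValue, Finset.sum_range_succ, bval_self, Nat.add_sub_cancel, hT]
  simp only [abs_zero, mul_zero, zero_mul, zero_sub, abs_neg]
  ring

lemma exists_stepValue_eq (hT : 0 < T) (hn : 0 < n) {t : ℝ} (ht : t ∈ Icc 0 T) :
    ∃ i < n, |t - gridPoint T n i| ≤ 2 * T / n ∧
      stepPortfolioValue T κ S γ n t = stepValue T κ S γ n i (S t) := by
  have hn' : (0 : ℝ) < n := by exact_mod_cast hn
  rw [stepPortfolioValue_eq_stepValue hT hn ht]
  rcases ht.2.lt_or_eq with htT | htT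
  · set i := ⌊t * n / T⌋₊
    have hcell := (mem_Ico_grid_iff hT hn ht.1 i).2 rfl
    have hin : i < n := (Nat.floor_lt (by have := ht.1; positivity)).2 <| by
      rw [div_lt_iff₀ hT]
      nlinarith
    refine ⟨i, hin, ?_, rfl⟩
    have hlen : ((i : ℝ) + 1) * T / n - gridPoint T n i = 2 * T / n := by
      unfold gridPoint; ring
    have hτ : gridPoint T n i ≤ (i : ℝ) * T / n := by unfold gridPoint; gcongr; linarith
    rw [abs_of_nonneg (by linarith [hcell.1])]
    linarith [hcell.2]
  · subst t
    have hτ : gridPoint T n (n - 1) = T - 2 * T / n := by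
      rw [gridPoint, Nat.cast_sub hn]
      field_simp
      ring
    refine ⟨n - 1, by omega, ?_, ?_⟩
    · rw [hτ, sub_sub_cancel, abs_of_pos (by positivity)]
    · rw [mul_div_cancel_left₀ _ hT.ne', Nat.floor_natCast, stepValue_self hn]

lemma stepValue_eq_of_lt {i : ℕ} (hT : 0 < T)
    (hγ : ∀ u < 0, γ u = 0) (hi : i < n) (s : ℝ) :
    stepValue T κ S γ n i s =
      γ (gridPoint T n i) * s
        - ∑ j ∈ Finset.range i,
            S (((j : ℝ) + 1) * T / n) * (γ (gridPoint T n (j + 1)) - γ (gridPoint T n j))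
        - κ * |γ (gridPoint T n i)| * s
        - κ * ∑ j ∈ Finset.range i,
            S (((j : ℝ) + 1) * T / n) * |γ (gridPoint T n (j + 1)) - γ (gridPoint T n j)| := by
  have h : ∀ j ≤ i, bval T γ n j = γ (gridPoint T n j) :=
    fun j hj => bval_eq_gridPoint hT hγ (hj.trans_lt hi)
  have hΔ : ∀ j ∈ Finset.range i, bval T γ n (j + 1) - bval T γ n j =
      γ (gridPoint T n (j + 1)) - γ (gridPoint T n j) := fun j hj => by
    rw [h (j + 1) (Finset.mem_range.1 hj), h j (Finset.mem_range.1 hj).le]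
  rw [stepValue, h i le_rfl]
  congr 2
  · congr 1
    exact Finset.sum_congr rfl fun j hj => by rw [hΔ j hj]
  · exact Finset.sum_congr rfl fun j hj => by rw [hΔ j hj]

end StepValue

section PortfolioValue

variable {κ : ℝ} {S : ℝ → ℝ} (μ : SignedMeasure ℝ)

lemma portfolioValue_of_neg {t : ℝ} (ht : t < 0) : portfolioValue κ S μ t = 0 := by
  simp [portfolioValue, stieltjesIntegral, totalVarIntegral, Icc_eq_empty (not_le.2 ht)]

lemma portfolioValue_zero_nonpos (hκ : 0 ≤ κ) (hS : 0 ≤ S 0) : portfolioValue κ S μ 0 ≤ 0 := by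
  simp only [portfolioValue, stieltjesIntegral, totalVarIntegral, Icc_self, integral_singleton,
    smul_eq_mul, μ.apply_eq_posPart_real_sub_negPart_real (measurableSet_singleton 0),
    μ.totalVariation_real_apply]
  have hP := measureReal_nonneg (μ := μ.toJordanDecomposition.posPart) (s := {0})
  have hN := measureReal_nonneg (μ := μ.toJordanDecomposition.negPart) (s := {0})
  nlinarith [abs_nonneg (μ.toJordanDecomposition.posPart.real {0} -
    μ.toJordanDecomposition.negPart.real {0}), mul_nonneg hκ hS]

lemma abs_setIntegral_Icc_le (m : Measure ℝ) [IsFiniteMeasure m] {t B : ℝ} (ht : 0 ≤ t)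
    (hB : ∀ u ∈ Icc 0 t, |S u| ≤ B) : |∫ u in Icc 0 t, S u ∂m| ≤ B * m.real univ :=
  (norm_setIntegral_le_of_norm_le_const (f := S) (measure_lt_top m _) hB).trans
    (mul_le_mul_of_nonneg_left (measureReal_mono (subset_univ _))
      ((abs_nonneg _).trans (hB 0 ⟨le_rfl, ht⟩)))

lemma bddBelow_portfolioValue {T : ℝ} (hS : ContinuousOn S (Icc 0 T)) :
    BddBelow (range fun t : Icc (0 : ℝ) T => portfolioValue κ S μ t) := by
  obtain ⟨B, hB⟩ := isCompact_Icc.exists_bound_of_continuousOn hS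
  set P := μ.toJordanDecomposition.posPart
  set N := μ.toJordanDecomposition.negPart
  refine ⟨-((2 + 2 * |κ|) * (B * μ.totalVariation.real univ)), ?_⟩
  rintro _ ⟨⟨t, ht⟩, rfl⟩
  have hB' : ∀ u ∈ Icc 0 t, |S u| ≤ B := fun u hu => hB u ⟨hu.1, hu.2.trans ht.2⟩
  have hγ := μ.abs_apply_le_totalVariation_real (measurableSet_Icc (a := 0) (b := t))
  have hSt : |S t| ≤ B := hB t ht
  have hI : |stieltjesIntegral S μ t| ≤ B * μ.totalVariation.real univ := by
    rw [stieltjesIntegral, μ.totalVariation_real_apply, mul_add]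
    exact (abs_sub _ _).trans (add_le_add (abs_setIntegral_Icc_le P ht.1 hB')
      (abs_setIntegral_Icc_le N ht.1 hB'))
  have hJ : |totalVarIntegral S μ t| ≤ B * μ.totalVariation.real univ :=
    abs_setIntegral_Icc_le _ ht.1 hB'
  have hγS : |μ (Icc 0 t) * S t| ≤ B * μ.totalVariation.real univ := by
    rw [abs_mul, mul_comm B]
    exact mul_le_mul hγ hSt (abs_nonneg _) measureReal_nonneg
  have hκγS : |κ * |μ (Icc 0 t)| * S t| ≤ |κ| * (B * μ.totalVariation.real univ) := by
    rw [abs_mul, abs_mul, abs_abs, mul_assoc, ← abs_mul]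
    exact mul_le_mul_of_nonneg_left hγS (abs_nonneg κ)
  have hκJ : |κ * totalVarIntegral S μ t| ≤ |κ| * (B * μ.totalVariation.real univ) := by
    rw [abs_mul]
    exact mul_le_mul_of_nonneg_left hJ (abs_nonneg κ)
  simp only [portfolioValue]
  linarith [neg_abs_le (μ (Icc 0 t) * S t), le_abs_self (stieltjesIntegral S μ t),
    le_abs_self (κ * |μ (Icc 0 t)| * S t), le_abs_self (κ * totalVarIntegral S μ t)]

end PortfolioValue

lemma iInf_portfolioValue_le {T κ : ℝ} {S : ℝ → ℝ} (μ : SignedMeasure ℝ) (hT : 0 ≤ T)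
    (hκ : 0 ≤ κ) (hS : ContinuousOn S (Icc 0 T)) (hS0 : 0 ≤ S 0) {τ : ℝ} (hτ : τ ≤ T) :
    ⨅ t : Icc (0 : ℝ) T, portfolioValue κ S μ t ≤ portfolioValue κ S μ τ := by
  rcases lt_or_ge τ 0 with hτ0 | hτ0
  · rw [portfolioValue_of_neg μ hτ0]
    exact (ciInf_le (bddBelow_portfolioValue μ hS) ⟨0, le_rfl, hT⟩).trans
      (portfolioValue_zero_nonpos μ hκ hS0)
  · exact ciInf_le (bddBelow_portfolioValue μ hS) ⟨τ, hτ0, hτ⟩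

lemma portfolioValue_sub_le_stepValue {T κ ε : ℝ} {S : ℝ → ℝ} (μ : SignedMeasure ℝ) {n i : ℕ}
    (hT : 0 < T) (hκ : 0 ≤ κ) (hε : 0 ≤ ε) (hS : ContinuousOn S (Icc 0 T))
    (hSnonneg : ∀ t ∈ Icc (0 : ℝ) T, 0 ≤ S t)
    (hmod : ∀ x ∈ Icc (0 : ℝ) T, ∀ y ∈ Icc (0 : ℝ) T, |x - y| ≤ 2 * T / n → |S x - S y| ≤ ε)
    (hi : i < n) {t : ℝ} (ht : t ∈ Icc 0 T) (hti : |t - gridPoint T n i| ≤ 2 * T / n) :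
    portfolioValue κ S μ (gridPoint T n i) - 2 * (1 + κ) * μ.totalVariation.real univ * ε ≤
      stepValue T κ S (fun u => μ (Icc 0 u)) n i (S t) := by
  have hn : 0 < n := by omega
  set τ := gridPoint T n i
  set M := μ.totalVariation.real univ
  have hγ : ∀ u < (0 : ℝ), μ (Icc 0 u) = 0 := fun u hu => by simp [Icc_eq_empty (not_le.2 hu)]
  have hcell : ∀ j < i, ∀ u ∈ Icc 0 (gridPoint T n (j + 1)) \ Icc 0 (gridPoint T n j),
      |S u - S (((j : ℝ) + 1) * T / n)| ≤ ε := by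
    intro j hj u hu
    rw [← gridPoint_add_two]
    exact hmod u ⟨hu.1.1, hu.1.2.trans (gridPoint_le hT.le hn (by omega))⟩ _
      ⟨hu.1.1.trans (hu.1.2.trans (gridPoint_mono hT.le (by omega))),
        gridPoint_le hT.le hn (by omega)⟩ (abs_sub_gridPoint_add_two_le hT.le hu)
  have hint : IntegrableOn S (Icc 0 τ) μ.totalVariation :=
    (hS.integrableOn_compact isCompact_Icc).mono_set
      (Icc_subset_Icc_right (gridPoint_le hT.le hn (by omega)))
  have hR := abs_sum_mul_sub_stieltjesIntegral_le μ (gridPoint_mono hT.le)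
    (gridPoint_zero_neg hT hn) hint hcell
  have hR' := sum_mul_abs_sub_le_totalVarIntegral_add μ (gridPoint_mono hT.le)
    (gridPoint_zero_neg hT hn) hint hcell fun j hj => hSnonneg _
      ⟨by positivity, gridPoint_add_two (T := T) (n := n) j ▸ gridPoint_le hT.le hn (by omega)⟩
  have hν : ε * μ.totalVariation.real (Icc 0 τ) ≤ ε * M :=
    mul_le_mul_of_nonneg_left (measureReal_mono (subset_univ _)) hε
  have hprice : |μ (Icc 0 τ)| * |S t - S τ| ≤ M * ε := by
    rcases lt_or_ge τ 0 with hτ | hτ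
    · rw [hγ τ hτ, abs_zero, zero_mul]
      exact mul_nonneg measureReal_nonneg hε
    · exact mul_le_mul (μ.abs_apply_le_totalVariation_real measurableSet_Icc)
        (hmod t ht τ ⟨hτ, gridPoint_le hT.le hn (by omega)⟩ hti) (abs_nonneg _)
        measureReal_nonneg
  have hposition : -(M * ε) ≤ μ (Icc 0 τ) * (S t - S τ) := by
    rw [← abs_mul] at hprice
    linarith [neg_abs_le (μ (Icc 0 τ) * (S t - S τ))]
  have hcost : κ * (|μ (Icc 0 τ)| * (S t - S τ)) ≤ κ * (M * ε) :=
    mul_le_mul_of_nonneg_left ((mul_le_mul_of_nonneg_left (le_abs_self _) (abs_nonneg _)).trans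
      hprice) hκ
  have hκR' := mul_le_mul_of_nonneg_left hR' hκ
  have hκν := mul_le_mul_of_nonneg_left hν hκ
  rw [stepValue_eq_of_lt hT hγ hi, portfolioValue]
  linarith [(abs_le.1 hR).2]

lemma eventually_iInf_portfolioValue_sub_le {T κ ε : ℝ} {S : ℝ → ℝ} (μ : SignedMeasure ℝ)
    (hT : 0 < T) (hκ : 0 ≤ κ) (hS : ContinuousOn S (Icc 0 T))
    (hSnonneg : ∀ t ∈ Icc (0 : ℝ) T, 0 ≤ S t) (hε : 0 < ε) :
    ∀ᶠ n in atTop, ∀ t ∈ Icc (0 : ℝ) T, (⨅ t : Icc (0 : ℝ) T, portfolioValue κ S μ t) - ε ≤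
      stepPortfolioValue T κ S (fun u => μ (Icc 0 u)) n t := by
  set C := 2 * (1 + κ) * μ.totalVariation.real univ
  have hC : 0 ≤ C := by positivity
  set η := ε / (C + 1)
  have hη : 0 < η := by positivity
  have hCη : C * η ≤ ε := by
    rw [← mul_div_assoc, div_le_iff₀ (by positivity)]
    nlinarith
  obtain ⟨δ, hδ, hSδ⟩ := Metric.uniformContinuousOn_iff_le.1
    (isCompact_Icc.uniformContinuousOn_of_continuous hS) η hη
  filter_upwards [(tendsto_const_div_atTop_nhds_zero_nat (2 * T)).eventually (ge_mem_nhds hδ),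
    eventually_gt_atTop 0] with n hnδ hn t ht
  have hmod : ∀ x ∈ Icc (0 : ℝ) T, ∀ y ∈ Icc (0 : ℝ) T, |x - y| ≤ 2 * T / n → |S x - S y| ≤ η :=
    fun x hx y hy hxy => hSδ x hx y hy (hxy.trans hnδ)
  obtain ⟨i, hi, hti, hW⟩ :=
    exists_stepValue_eq (κ := κ) (S := S) (γ := fun u => μ (Icc 0 u)) hT hn ht
  rw [hW]
  calc (⨅ t : Icc (0 : ℝ) T, portfolioValue κ S μ t) - ε
      ≤ portfolioValue κ S μ (gridPoint T n i) - C * η := by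
        linarith [iInf_portfolioValue_le μ hT.le hκ hS (hSnonneg 0 ⟨le_rfl, hT.le⟩)
          (gridPoint_le hT.le hn (by omega : i ≤ n + 1))]
    _ ≤ stepValue T κ S (fun u => μ (Icc 0 u)) n i (S t) :=
        portfolioValue_sub_le_stepValue μ hT hκ hη.le hS hSnonneg hmod hi ht hti

theorem stmt_11_general (T κ : ℝ) (hT : 0 < T) (hκ : κ ∈ Set.Ioo (0:ℝ) 1)
    (S : ℝ → ℝ) (hS : ContinuousOn S (Icc 0 T)) (hSpos : ∀ t ∈ Icc (0:ℝ) T, 0 < S t)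
    (μ : SignedMeasure ℝ) :
    (⨅ t : Set.Icc (0:ℝ) T, portfolioValue κ S μ t) ≤
      Filter.liminf
        (fun n => ⨅ t : Set.Icc (0:ℝ) T,
          stepPortfolioValue T κ S (fun u => μ (Icc 0 u)) n t)
        Filter.atTop := by
  have hbound : ∀ ε > 0, ∀ᶠ n in atTop, ∀ t ∈ Icc (0 : ℝ) T,
      (⨅ t : Icc (0 : ℝ) T, portfolioValue κ S μ t) - ε ≤
        stepPortfolioValue T κ S (fun u => μ (Icc 0 u)) n t := fun ε hε =>
    eventually_iInf_portfolioValue_sub_le μ hT hκ.1.le hS (fun t ht => (hSpos t ht).le) hε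
  have hcob : IsCoboundedUnder (· ≥ ·) atTop
      (fun n => ⨅ t : Icc (0 : ℝ) T, stepPortfolioValue T κ S (fun u => μ (Icc 0 u)) n t) := by
    refine isCoboundedUnder_ge_of_eventually_le atTop (x := 0) ?_
    filter_upwards [hbound 1 one_pos, eventually_gt_atTop 0] with n hn hn0
    calc ⨅ t : Icc (0 : ℝ) T, stepPortfolioValue T κ S (fun u => μ (Icc 0 u)) n t
        ≤ stepPortfolioValue T κ S (fun u => μ (Icc 0 u)) n 0 :=
          ciInf_le ⟨_, by rintro _ ⟨t, rfl⟩; exact hn t t.2⟩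
            (⟨0, le_rfl, hT.le⟩ : Icc (0 : ℝ) T)
      _ = 0 := by
          rw [stepPortfolioValue_eq_stepValue hT hn0 ⟨le_rfl, hT.le⟩]
          simp [stepValue, bval]
  have : Nonempty (Icc (0 : ℝ) T) := ⟨⟨0, le_rfl, hT.le⟩⟩
  refine le_of_forall_pos_le_add fun ε hε => ?_
  have := le_liminf_of_le hcob ((hbound ε hε).mono fun n hn => le_ciInf fun t => hn t t.2)
  linarith

/-- Inequality (4.8) in Step 2 of the proof of Lemma 4.2 of the paper: for a strategy `γ`
(encoded by the signed measure `μ`, `γ_t = μ([0,t])`) with `γ_T = 0`, the running minima of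
the discretized wealth processes satisfy
`liminf_n inf_{0≤t≤T} V^{γ̄^n}_t ≥ inf_{0≤t≤T} V^γ_t`. -/
theorem stmt_11 (T κ : ℝ) (hT : 0 < T) (hκ : κ ∈ Set.Ioo (0:ℝ) 1)
    (S : ℝ → ℝ) (hS : ContinuousOn S (Icc 0 T)) (hSpos : ∀ t ∈ Icc (0:ℝ) T, 0 < S t)
    (μ : SignedMeasure ℝ) (hliq : μ (Icc 0 T) = 0) :
    (⨅ t : Set.Icc (0:ℝ) T, portfolioValue κ S μ t) ≤
      Filter.liminf
        (fun n => ⨅ t : Set.Icc (0:ℝ) T,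
          stepPortfolioValue T κ S (fun u => μ (Icc 0 u)) n t)
        Filter.atTop :=
  stmt_11_general T κ hT hκ S hS hSpos μ
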